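/- The set S_ω := { f(θ) : θ ∈ ℝ^N, κ_i(θ) > 0 for all i, and Σ_{i=1}^N 1/κ_i(θ) ≤ 2 } is a convex subset of ℝ^N. -/

import Mathlib

open Real Finset

/-- The Kuramoto interaction vector field `f_i(θ) = Σ_j sin (θ_j - θ_i)`. -/
noncomputable def kuraF (N : ℕ) (θ : Fin N → ℝ) (i : Fin N) : ℝ :=
  ∑ j, Real.sin (θ j - θ i)

/-- `κ_i(θ) = Σ_j cos (θ_j - θ_i)`. -/
noncomputable def kappa (N : ℕ) (θ : Fin N → ℝ) (i : Fin N) : ℝ :=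
  ∑ j, Real.cos (θ j - θ i)

/-- The set `S_ω` of frequency vectors admitting a stable fully synchronized
configuration: images `f(θ)` of configurations with `κ_i(θ) > 0` for all `i` and
`Σ_i 1/κ_i(θ) ≤ 2`. -/
def stableFreqSet (N : ℕ) : Set (Fin N → ℝ) :=
  {ω | ∃ θ : Fin N → ℝ, (∀ i, 0 < kappa N θ i) ∧ (∑ i, 1 / kappa N θ i ≤ 2) ∧
    ω = kuraF N θ}

/-!
Write `A = Σ_j sin θ_j`, `B = Σ_j cos θ_j` and `R² = A² + B²`. Then `κ_i² + f_i² = R²`,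
`Σ_i κ_i = R²` and `Σ_i f_i = 0`, so if all `κ_i > 0` the vector `ω = f(θ)` satisfies
`Σ_i ω_i = 0`, `|ω_i| < R` and `Σ_i √(R² - ω_i²) = R²`. Conversely, if `Σ_i ω_i = 0` and some
`r > |ω_i|` has `r² ≤ Σ_i √(r² - ω_i²)`, the largest root `R ≥ r` of
`x ↦ Σ_i √(x² - ω_i²) - x²` has nonpositive derivative `R (Σ_i 1/√(R² - ω_i²) - 2)`, which is the
stability condition, and `θ_i = arcsin (-ω_i / R)` realizes `ω`. The existence of such an `r` is a
convex condition on `ω` because `(a, b) ↦ √(a² - b²)` is concave on `|b| ≤ a` and `r ↦ r²` is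
convex.
-/

open Set Filter Topology

lemma mul_add_mul_sqrt_sq_sub_sq_le {t s a₁ a₂ b₁ b₂ : ℝ} (ht : 0 ≤ t) (hs : 0 ≤ s)
    (h₁ : |b₁| ≤ a₁) (h₂ : |b₂| ≤ a₂) :
    t * √(a₁ ^ 2 - b₁ ^ 2) + s * √(a₂ ^ 2 - b₂ ^ 2) ≤
      √((t * a₁ + s * a₂) ^ 2 - (t * b₁ + s * b₂) ^ 2) := by
  obtain ⟨hb₁, hb₁'⟩ := abs_le.mp h₁
  obtain ⟨hb₂, hb₂'⟩ := abs_le.mp h₂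
  have hu₁ : 0 ≤ a₁ ^ 2 - b₁ ^ 2 := by nlinarith
  have hu₂ : 0 ≤ a₂ ^ 2 - b₂ ^ 2 := by nlinarith
  -- reverse Cauchy–Schwarz for the Lorentzian form `a₁ a₂ - b₁ b₂`
  have hrev : √(a₁ ^ 2 - b₁ ^ 2) * √(a₂ ^ 2 - b₂ ^ 2) ≤ a₁ * a₂ - b₁ * b₂ := by
    rw [← Real.sqrt_mul hu₁]
    refine Real.sqrt_le_iff.mpr ⟨by nlinarith, ?_⟩
    nlinarith [sq_nonneg (a₁ * b₂ - a₂ * b₁)]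
  apply Real.le_sqrt_of_sq_le
  have e₁ := Real.sq_sqrt hu₁
  have e₂ := Real.sq_sqrt hu₂
  linear_combination 2 * mul_le_mul_of_nonneg_left hrev (mul_nonneg ht hs) + t ^ 2 * e₁ + s ^ 2 * e₂

lemma sq_sub_sq_pos_of_abs_lt {a b : ℝ} (h : |a| < b) : 0 < b ^ 2 - a ^ 2 :=
  sub_pos.mpr (sq_lt_sq' (abs_lt.mp h).1 (abs_lt.mp h).2)

theorem HasDerivAt.nonpos_of_isMaxOn_Ici {g : ℝ → ℝ} {d a : ℝ} (hg : HasDerivAt g d a)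
    (hmax : IsMaxOn g (Ici a) a) : d ≤ 0 := by
  have h1 : (1 : ℝ) ∈ posTangentConeAt (Ici a) a :=
    mem_posTangentConeAt_of_segment_subset (by simp [segment_eq_Icc, Set.Icc_subset_Ici_self])
  simpa using hmax.localize.hasFDerivWithinAt_nonpos hg.hasFDerivAt.hasFDerivWithinAt h1

lemma Continuous.exists_greatest_zero {g : ℝ → ℝ} {r : ℝ} (hg : Continuous g) (hr : 0 ≤ g r)
    (hbdd : BddAbove {x | r ≤ x ∧ 0 ≤ g x}) :
    ∃ R, r ≤ R ∧ g R = 0 ∧ ∀ x, R < x → g x < 0 := by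
  have hclosed : IsClosed {x | r ≤ x ∧ 0 ≤ g x} :=
    (isClosed_le continuous_const continuous_id).inter (isClosed_le continuous_const hg)
  obtain ⟨hrR, hR⟩ := hclosed.csSup_mem ⟨r, le_rfl, hr⟩ hbdd
  have hneg : ∀ x, sSup {x | r ≤ x ∧ 0 ≤ g x} < x → g x < 0 := fun x hx =>
    not_le.mp fun hx' => (le_csSup hbdd ⟨hrR.trans hx.le, hx'⟩).not_gt hx
  refine ⟨_, hrR, le_antisymm ?_ hR, hneg⟩
  exact le_of_tendsto (hg.continuousAt.tendsto.mono_left (nhdsWithin_le_nhds (s := Ioi _)))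
    (eventually_nhdsWithin_of_forall fun x hx => (hneg x hx).le)

section SelfConsistency

variable {ι : Type*} [Fintype ι]

/-- For a configuration with `κ_i > 0` and order parameter `R = |Σ_j exp (i θ_j)|` one has
`κ_i = √(R² - f_i²)` and `Σ_i κ_i = R²`, so `R` is a zero of this function of `x`. -/
noncomputable def selfConsistencyGap (ω : ι → ℝ) (x : ℝ) : ℝ :=
  ∑ i, √(x ^ 2 - ω i ^ 2) - x ^ 2

def IsSyncRadius (ω : ι → ℝ) (r : ℝ) : Prop :=
  (∀ i, |ω i| < r) ∧ 0 ≤ selfConsistencyGap ω r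

lemma continuous_selfConsistencyGap (ω : ι → ℝ) : Continuous (selfConsistencyGap ω) := by
  unfold selfConsistencyGap
  fun_prop

lemma selfConsistencyGap_le (ω : ι → ℝ) {x : ℝ} (hx : 0 ≤ x) :
    selfConsistencyGap ω x ≤ Fintype.card ι * x - x ^ 2 := by
  have hle : ∀ i, √(x ^ 2 - ω i ^ 2) ≤ x := fun i =>
    Real.sqrt_le_iff.mpr ⟨hx, by nlinarith [sq_nonneg (ω i)]⟩
  have : ∑ i, √(x ^ 2 - ω i ^ 2) ≤ ∑ _i : ι, x := Finset.sum_le_sum fun i _ => hle i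
  simp only [sum_const, card_univ, nsmul_eq_mul] at this
  unfold selfConsistencyGap
  linarith

lemma bddAbove_setOf_selfConsistencyGap_nonneg (ω : ι → ℝ) :
    BddAbove {x | 0 ≤ selfConsistencyGap ω x} := by
  refine ⟨Fintype.card ι, fun x hx => ?_⟩
  rcases le_or_gt x 0 with hx0 | hx0
  · exact hx0.trans (Nat.cast_nonneg _)
  · have hgap : 0 ≤ selfConsistencyGap ω x := hx
    nlinarith [selfConsistencyGap_le ω hx0.le]

lemma hasDerivAt_selfConsistencyGap {ω : ι → ℝ} {x : ℝ} (hx : ∀ i, |ω i| < x) :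
    HasDerivAt (selfConsistencyGap ω) (x * (∑ i, 1 / √(x ^ 2 - ω i ^ 2) - 2)) x := by
  have hpos : ∀ i, 0 < x ^ 2 - ω i ^ 2 := fun i => sq_sub_sq_pos_of_abs_lt (hx i)
  have hsqrt : ∀ i, HasDerivAt (fun y => √(y ^ 2 - ω i ^ 2)) (x / √(x ^ 2 - ω i ^ 2)) x := by
    intro i
    convert ((hasDerivAt_pow 2 x).sub_const (ω i ^ 2)).sqrt (hpos i).ne' using 1
    field_simp
    ring
  have h := (HasDerivAt.fun_sum (u := Finset.univ) fun i _ => hsqrt i).fun_sub (hasDerivAt_pow 2 x)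
  refine h.congr_deriv ?_
  simp only [mul_sub, mul_sum, mul_one_div]
  norm_num
  ring

theorem IsSyncRadius.exists_stable_root [Nonempty ι] {ω : ι → ℝ} {r : ℝ}
    (h : IsSyncRadius ω r) :
    ∃ R, (∀ i, |ω i| < R) ∧ selfConsistencyGap ω R = 0 ∧
      ∑ i, 1 / √(R ^ 2 - ω i ^ 2) ≤ 2 := by
  obtain ⟨R, hrR, hR, hneg⟩ := (continuous_selfConsistencyGap ω).exists_greatest_zero h.2
    ((bddAbove_setOf_selfConsistencyGap_nonneg ω).mono fun x hx => hx.2)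
  have hωR : ∀ i, |ω i| < R := fun i => (h.1 i).trans_le hrR
  have hR0 : 0 < R := (abs_nonneg _).trans_lt (hωR (Classical.arbitrary ι))
  refine ⟨R, hωR, hR, ?_⟩
  have hmax : IsMaxOn (selfConsistencyGap ω) (Ici R) R := isMaxOn_iff.mpr fun x hx => by
    rcases (mem_Ici.mp hx).eq_or_lt with rfl | hlt
    · exact le_rfl
    · exact (hR ▸ (hneg x hlt).le : selfConsistencyGap ω x ≤ selfConsistencyGap ω R)
  have hd := (hasDerivAt_selfConsistencyGap hωR).nonpos_of_isMaxOn_Ici hmax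
  nlinarith

theorem IsSyncRadius.combo {ω₁ ω₂ : ι → ℝ} {r₁ r₂ t s : ℝ} (h₁ : IsSyncRadius ω₁ r₁)
    (h₂ : IsSyncRadius ω₂ r₂) (ht : 0 ≤ t) (hs : 0 ≤ s) (hts : t + s = 1) :
    IsSyncRadius (t • ω₁ + s • ω₂) (t * r₁ + s * r₂) := by
  constructor
  · intro i
    have hlt : t * |ω₁ i| + s * |ω₂ i| < t * r₁ + s * r₂ := by
      rcases ht.eq_or_lt with rfl | ht
      · obtain rfl : s = 1 := by linarith
        simpa using h₂.1 i
      · nlinarith [mul_lt_mul_of_pos_left (h₁.1 i) ht, mul_le_mul_of_nonneg_left (h₂.1 i).le hs]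
    calc |(t • ω₁ + s • ω₂) i| ≤ t * |ω₁ i| + s * |ω₂ i| := by
          simpa [abs_mul, abs_of_nonneg ht, abs_of_nonneg hs] using abs_add_le (t * ω₁ i) (s * ω₂ i)
      _ < t * r₁ + s * r₂ := hlt
  · have g₁ : r₁ ^ 2 ≤ ∑ i, √(r₁ ^ 2 - ω₁ i ^ 2) := sub_nonneg.mp h₁.2
    have g₂ : r₂ ^ 2 ≤ ∑ i, √(r₂ ^ 2 - ω₂ i ^ 2) := sub_nonneg.mp h₂.2
    refine sub_nonneg.mpr ?_
    calc (t * r₁ + s * r₂) ^ 2 ≤ t * r₁ ^ 2 + s * r₂ ^ 2 := by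
          nlinarith [mul_nonneg (mul_nonneg ht hs) (sq_nonneg (r₁ - r₂))]
      _ ≤ ∑ i, (t * √(r₁ ^ 2 - ω₁ i ^ 2) + s * √(r₂ ^ 2 - ω₂ i ^ 2)) := by
          rw [sum_add_distrib, ← mul_sum, ← mul_sum]
          gcongr
      _ ≤ ∑ i, √((t * r₁ + s * r₂) ^ 2 - (t • ω₁ + s • ω₂) i ^ 2) :=
          sum_le_sum fun i _ =>
            mul_add_mul_sqrt_sq_sub_sq_le ht hs (h₁.1 i).le (h₂.1 i).le

lemma convex_setOf_exists_isSyncRadius : Convex ℝ {ω : ι → ℝ | ∃ r, IsSyncRadius ω r} :=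
  fun _ ⟨_, h₁⟩ _ ⟨_, h₂⟩ _ _ ht hs hts => ⟨_, h₁.combo h₂ ht hs hts⟩

end SelfConsistency

section Kuramoto

variable {N : ℕ}

lemma kuraF_eq (θ : Fin N → ℝ) (i : Fin N) :
    kuraF N θ i = (∑ j, sin (θ j)) * cos (θ i) - (∑ j, cos (θ j)) * sin (θ i) := by
  simp only [kuraF, sin_sub, sum_sub_distrib, sum_mul]

lemma kappa_eq (θ : Fin N → ℝ) (i : Fin N) :
    kappa N θ i = (∑ j, cos (θ j)) * cos (θ i) + (∑ j, sin (θ j)) * sin (θ i) := by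
  simp only [kappa, cos_sub, sum_add_distrib, sum_mul]

lemma kappa_sq_add_kuraF_sq (θ : Fin N → ℝ) (i : Fin N) :
    kappa N θ i ^ 2 + kuraF N θ i ^ 2 = (∑ j, cos (θ j)) ^ 2 + (∑ j, sin (θ j)) ^ 2 := by
  rw [kappa_eq, kuraF_eq]
  linear_combination ((∑ j, cos (θ j)) ^ 2 + (∑ j, sin (θ j)) ^ 2) * sin_sq_add_cos_sq (θ i)

lemma sum_kappa (θ : Fin N → ℝ) :
    ∑ i, kappa N θ i = (∑ j, cos (θ j)) ^ 2 + (∑ j, sin (θ j)) ^ 2 := by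
  simp only [kappa_eq, sum_add_distrib, ← mul_sum]
  ring

lemma sum_kuraF (θ : Fin N → ℝ) : ∑ i, kuraF N θ i = 0 := by
  simp only [kuraF_eq, sum_sub_distrib, ← mul_sum]
  ring

lemma isSyncRadius_kuraF {θ : Fin N → ℝ} (hκ : ∀ i, 0 < kappa N θ i) :
    IsSyncRadius (kuraF N θ) √((∑ j, cos (θ j)) ^ 2 + (∑ j, sin (θ j)) ^ 2) := by
  have hR : √((∑ j, cos (θ j)) ^ 2 + (∑ j, sin (θ j)) ^ 2) ^ 2 =
      (∑ j, cos (θ j)) ^ 2 + (∑ j, sin (θ j)) ^ 2 := sq_sqrt (by positivity)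
  have hκ_eq : ∀ i, √((∑ j, cos (θ j)) ^ 2 + (∑ j, sin (θ j)) ^ 2 - kuraF N θ i ^ 2) =
      kappa N θ i := fun i => by
    rw [← kappa_sq_add_kuraF_sq θ i, add_sub_cancel_right, sqrt_sq (hκ i).le]
  constructor
  · intro i
    rw [← sqrt_sq_eq_abs]
    refine sqrt_lt_sqrt (sq_nonneg _) ?_
    nlinarith [kappa_sq_add_kuraF_sq θ i, hκ i]
  · simp only [selfConsistencyGap, hR, hκ_eq, sum_kappa, sub_self, le_refl]

lemma exists_kappa_eq_and_kuraF_eq {ω : Fin N → ℝ} {R : ℝ} (hR : 0 < R) (hω : ∀ i, |ω i| ≤ R)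
    (hsum : ∑ i, ω i = 0) (hroot : ∑ i, √(R ^ 2 - ω i ^ 2) = R ^ 2) :
    ∃ θ : Fin N → ℝ, (∀ i, kappa N θ i = √(R ^ 2 - ω i ^ 2)) ∧ kuraF N θ = ω := by
  set θ : Fin N → ℝ := fun i => arcsin (-ω i / R)
  have hsin : ∀ i, sin (θ i) = -ω i / R := fun i => by
    obtain ⟨h₁, h₂⟩ := abs_le.mp (hω i)
    exact sin_arcsin (by rw [le_div_iff₀ hR]; linarith) (by rw [div_le_one hR]; linarith)
  have hcos : ∀ i, cos (θ i) = √(R ^ 2 - ω i ^ 2) / R := fun i => by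
    have h : 1 - (-ω i / R) ^ 2 = (R ^ 2 - ω i ^ 2) / R ^ 2 := by field_simp
    rw [cos_arcsin, h, sqrt_div' _ (sq_nonneg R), sqrt_sq hR.le]
  have hsum_sin : ∑ j, sin (θ j) = 0 := by
    simp only [hsin, ← sum_div, sum_neg_distrib, hsum, neg_zero, zero_div]
  have hsum_cos : ∑ j, cos (θ j) = R := by
    simp only [hcos, ← sum_div, hroot]
    field_simp
  refine ⟨θ, fun i => ?_, funext fun i => ?_⟩
  · rw [kappa_eq, hsum_sin, hsum_cos, hcos]
    field_simp
    ring
  · rw [kuraF_eq, hsum_sin, hsum_cos, hsin]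
    field_simp
    ring

end Kuramoto

lemma stableFreqSet_eq (N : ℕ) [NeZero N] :
    stableFreqSet N = {ω | ∑ i, ω i = 0} ∩ {ω | ∃ r, IsSyncRadius ω r} := by
  ext ω
  constructor
  · rintro ⟨θ, hκ, -, rfl⟩
    exact ⟨sum_kuraF θ, _, isSyncRadius_kuraF hκ⟩
  · rintro ⟨hsum, r, hr⟩
    obtain ⟨R, hωR, hroot, hstable⟩ := hr.exists_stable_root
    have hR : 0 < R := (abs_nonneg _).trans_lt (hωR 0)
    obtain ⟨θ, hκ, hf⟩ := exists_kappa_eq_and_kuraF_eq (N := N) hR (fun i => (hωR i).le) hsum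
      (sub_eq_zero.mp hroot)
    refine ⟨θ, fun i => hκ i ▸ sqrt_pos.mpr (sq_sub_sq_pos_of_abs_lt (hωR i)), ?_, hf.symm⟩
    simpa only [hκ] using hstable

theorem stmt7_general (N : ℕ) : Convex ℝ (stableFreqSet N) := by
  rcases N.eq_zero_or_pos with rfl | hN
  · exact Set.subsingleton_of_subsingleton.convex
  have : NeZero N := ⟨hN.ne'⟩
  rw [stableFreqSet_eq]
  refine Convex.inter (fun ω₁ h₁ ω₂ h₂ t s _ _ _ => ?_) convex_setOf_exists_isSyncRadius
  simp_all [sum_add_distrib, ← mul_sum]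

theorem stmt7 (N : ℕ) (hN : 2 ≤ N) : Convex ℝ (stableFreqSet N) :=
  stmt7_general N
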